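/- arXiv:2602.06752 — 3 statements merged into one kernel-verified Lean document; each statement's English description precedes it below -/
import Mathlib

section
/- For any subset X of ℓ^∞, the set U_N(X) of nearly X-universal functions is closed in C(ℝ) equipped with the metric d_∞(f,g) = min(‖f−g‖_∞, 1). -/
open Filter Set

/-- The metric d_∞(f,g) = min(‖f−g‖_∞, 1) on functions ℝ → ℝ (value 1 if sup is infinite). -/
noncomputable def dinf (f g : ℝ → ℝ) : ℝ :=
  (min (⨆ x : ℝ, ENNReal.ofReal |f x - g x|) 1).toReal

/-- x is a bounded sequence, i.e. x ∈ ℓ^∞. -/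
def Bdd (x : ℕ → ℝ) : Prop := ∃ C : ℝ, ∀ n : ℕ, |x n| ≤ C

/-- sup_n |f(t+n) − x_n|, computed in ℝ≥0∞. -/
noncomputable def gapSup (f : ℝ → ℝ) (x : ℕ → ℝ) (t : ℝ) : ENNReal :=
  ⨆ n : ℕ, ENNReal.ofReal |f (t + n) - x n|

/-- f ∈ U(X): f is an X-universal interpolating function. -/
def memU (X : Set (ℕ → ℝ)) (f : ℝ → ℝ) : Prop :=
  Continuous f ∧ ∀ x ∈ X, ∃ t : ℝ, ∀ n : ℕ, f (t + n) = x n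

/-- f ∈ U_N(X): f is nearly X-universal. -/
def memUN (X : Set (ℕ → ℝ)) (f : ℝ → ℝ) : Prop :=
  Continuous f ∧ ∀ x ∈ X, (⨅ t : ℝ, gapSup f x t) = 0

/-- f is piecewise affine with locally finitely many breakpoints. -/
def PWAffine (f : ℝ → ℝ) : Prop :=
  ∃ z : ℤ → ℝ, StrictMono z ∧ Tendsto z atTop atTop ∧ Tendsto z atBot atBot ∧
    ∀ n : ℤ, ∃ a b : ℝ, ∀ x ∈ Set.Icc (z n) (z (n + 1)), f x = a * x + b

/-- span(𝟏): the set of constant sequences. -/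
def spanOne : Set (ℕ → ℝ) := {x | ∃ c : ℝ, x = fun _ => c}

/-- dist(x, span(𝟏)) computed in ℝ≥0∞. -/
noncomputable def distSpanOne (x : ℕ → ℝ) : ENNReal :=
  ⨅ c : ℝ, ⨆ n : ℕ, ENNReal.ofReal |x n - c|

/- If g is nearly X-universal and f is not, then some x ∈ X has inf_t sup_n |f(t+n) − x_n| = ε > 0,
while the same infimum for g vanishes; by the triangle inequality ε ≤ ‖f − g‖_∞, so the ball of
radius min(ε, 1) around f in d_∞ contains no nearly X-universal function. -/

theorem gapSup_le_iSup_add_gapSup (f g : ℝ → ℝ) (x : ℕ → ℝ) (t : ℝ) :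
    gapSup f x t ≤ (⨆ y, ENNReal.ofReal |f y - g y|) + gapSup g x t :=
  iSup_le fun n =>
    calc ENNReal.ofReal |f (t + n) - x n|
        ≤ ENNReal.ofReal (|f (t + n) - g (t + n)| + |g (t + n) - x n|) :=
          ENNReal.ofReal_le_ofReal (abs_sub_le _ _ _)
      _ ≤ ENNReal.ofReal |f (t + n) - g (t + n)| + ENNReal.ofReal |g (t + n) - x n| :=
          ENNReal.ofReal_add_le
      _ ≤ (⨆ y, ENNReal.ofReal |f y - g y|) + gapSup g x t :=
          add_le_add (le_iSup (fun y => ENNReal.ofReal |f y - g y|) (t + n))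
            (le_iSup (fun m : ℕ => ENNReal.ofReal |g (t + m) - x m|) n)

theorem iInf_gapSup_le_iSup_add_iInf_gapSup (f g : ℝ → ℝ) (x : ℕ → ℝ) :
    ⨅ t, gapSup f x t ≤ (⨆ y, ENNReal.ofReal |f y - g y|) + ⨅ t, gapSup g x t := by
  rw [ENNReal.add_iInf]
  exact iInf_mono fun t => gapSup_le_iSup_add_gapSup f g x t

theorem min_one_ne_top (a : ENNReal) : min a 1 ≠ ⊤ :=
  (min_lt_of_right_lt ENNReal.one_lt_top).ne

theorem stmt2_general (X : Set (ℕ → ℝ)) :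
    ∀ f : ℝ → ℝ, Continuous f → ¬ memUN X f →
      ∃ r > (0 : ℝ), ∀ g : ℝ → ℝ, Continuous g → dinf f g < r → ¬ memUN X g := by
  intro f hf hfN
  obtain ⟨x, hxX, hgap⟩ : ∃ x ∈ X, ⨅ t, gapSup f x t ≠ 0 := by
    by_contra! h
    exact hfN ⟨hf, h⟩
  refine ⟨(min (⨅ t, gapSup f x t) 1).toReal,
    ENNReal.toReal_pos (by simp [hgap]) (min_one_ne_top _), fun g _ hfg hgN => ?_⟩
  have hgap_le : ⨅ t, gapSup f x t ≤ ⨆ y, ENNReal.ofReal |f y - g y| := by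
    simpa [hgN.2 x hxX] using iInf_gapSup_le_iSup_add_iInf_gapSup f g x
  exact hfg.not_ge (ENNReal.toReal_mono (min_one_ne_top _) (min_le_min_right 1 hgap_le))

/-- U_N(X) is closed in (C(ℝ), d_∞): its complement within C(ℝ) is open. -/
theorem stmt2 (X : Set (ℕ → ℝ)) (hX : ∀ x ∈ X, Bdd x) :
    ∀ f : ℝ → ℝ, Continuous f → ¬ memUN X f →
      ∃ r > (0 : ℝ), ∀ g : ℝ → ℝ, Continuous g → dinf f g < r → ¬ memUN X g :=
  stmt2_general X
end

section
/- Let X ⊆ ℓ^∞ contain the zero sequence 𝟎 and satisfy span(𝟏) + X ⊆ X. Then every continuous piecewise affine function (with locally finitely many breakpoints) lies in the closure of C(ℝ) \ U_N(X) with respect to d_∞; i.e., for every such f and every ε > 0 there exists g ∈ C(ℝ) with d_∞(f,g) < ε that is not nearly X-universal. -/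
open Filter Set

/-!
Fix `γ > 0`. Cut each block `[2i, 2i + 2]` into an odd number `Q` of cells, so fine that `f` moves
by at most `γ/2` on a cell. The approximant `g` is constant, with a value in `γℤ` within `γ/2` of
`f`, on the outer quarters of every cell and linear across their middle halves. As `Q` is odd, a
shift by `1` moves a point by `Q/2` cells, so for `x` in the first half of a block at least one of
`x` and `x + 1` lies on a plateau. Hence every orbit `t + ℕ` meets a point where `g ∈ γℤ`, i.e.
where `g` is `γ/2` away from the constant sequence `γ/2`, which lies in `X` because
`span(𝟏) + X ⊆ X` and `0 ∈ X`.
-/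

noncomputable def ramp (y : ℝ) : ℝ := projIcc (0 : ℝ) 1 zero_le_one y

@[fun_prop]
theorem continuous_ramp : Continuous ramp := continuous_subtype_val.comp continuous_projIcc

theorem ramp_mem_Icc (y : ℝ) : ramp y ∈ Icc (0 : ℝ) 1 := (projIcc 0 1 zero_le_one y).2

theorem ramp_of_nonpos {y : ℝ} (hy : y ≤ 0) : ramp y = 0 := by
  rw [ramp, projIcc_of_le_left _ hy]

theorem ramp_of_one_le {y : ℝ} (hy : 1 ≤ y) : ramp y = 1 := by
  rw [ramp, projIcc_of_right_le _ hy]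

theorem continuous_piecewise_floor {α : Type*} [TopologicalSpace α] {F : ℤ → ℝ → α}
    (hF : ∀ k, ContinuousOn (F k) (Icc k (k + 1)))
    (hglue : ∀ k : ℤ, F k (k + 1) = F (k + 1) (k + 1)) : Continuous fun x => F ⌊x⌋ x := by
  refine (locallyFinite_Icc_of_tendsto tendsto_intCast_atTop_atTop
    (tendsto_atBot_add_const_right _ _ (tendsto_intCast_atBot_iff.2 tendsto_id))).continuous
    (iUnion_Icc_intCast ℝ) (fun _ => isClosed_Icc) fun k => (hF k).congr fun x hx => ?_
  rcases hx.2.lt_or_eq with hlt | rfl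
  · rw [Int.floor_eq_iff.2 ⟨hx.1, hlt⟩]
  · rw [Int.floor_add_one, Int.floor_intCast, hglue]

/-- Equal to `v k` on `[k, k + 1/4]` and to `v (k + 1)` on `[k + 3/4, k + 1]`, linear in between. -/
noncomputable def plateauInterp (v : ℤ → ℝ) (u : ℝ) : ℝ :=
  v ⌊u⌋ + ramp (2 * Int.fract u - 1 / 2) * (v (⌊u⌋ + 1) - v ⌊u⌋)

theorem plateauInterp_intCast (v : ℤ → ℝ) (k : ℤ) : plateauInterp v k = v k := by
  rw [plateauInterp, Int.floor_intCast, Int.fract_intCast, ramp_of_nonpos (by norm_num)]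
  ring

theorem continuous_plateauInterp (v : ℤ → ℝ) : Continuous (plateauInterp v) := by
  have hF : ∀ k : ℤ, Continuous fun u : ℝ => v k + ramp (2 * (u - k) - 1 / 2) * (v (k + 1) - v k) :=
    fun k => by fun_prop
  convert continuous_piecewise_floor (fun k => (hF k).continuousOn) fun k => ?_ using 2 with u
  · rw [plateauInterp, ← Int.self_sub_floor]
  · rw [ramp_of_one_le (by linarith), ramp_of_nonpos (by push_cast; linarith)]
    ring

theorem plateauInterp_mem_of_convex {s : Set ℝ} (hs : Convex ℝ s) (v : ℤ → ℝ) (u : ℝ)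
    (h₀ : v ⌊u⌋ ∈ s) (h₁ : v (⌊u⌋ + 1) ∈ s) : plateauInterp v u ∈ s :=
  hs.add_smul_sub_mem h₀ h₁ (ramp_mem_Icc _)

theorem plateauInterp_mem_range (v : ℤ → ℝ) {u : ℝ}
    (hu : Int.fract u ≤ 1 / 4 ∨ 3 / 4 ≤ Int.fract u) : plateauInterp v u ∈ range v := by
  rcases hu with hu | hu
  · exact ⟨⌊u⌋, by rw [plateauInterp, ramp_of_nonpos (by linarith)]; ring⟩
  · exact ⟨⌊u⌋ + 1, by rw [plateauInterp, ramp_of_one_le (by linarith)]; ring⟩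

theorem plateauInterp_mem_range_or_add_half (v : ℤ → ℝ) (u : ℝ) (m : ℤ) :
    plateauInterp v u ∈ range v ∨ plateauInterp v (u + m + 1 / 2) ∈ range v := by
  by_cases hu : Int.fract u ≤ 1 / 4 ∨ 3 / 4 ≤ Int.fract u
  · exact .inl (plateauInterp_mem_range v hu)
  refine .inr (plateauInterp_mem_range v ?_)
  rw [not_or, not_le, not_le] at hu
  have hj : Int.fract (u + m + 1 / 2) = Int.fract u + 1 / 2 + (m + ⌊u⌋ - ⌊u + m + 1 / 2⌋ : ℤ) := by
    push_cast
    rw [← Int.self_sub_floor, ← Int.self_sub_floor]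
    ring
  rcases le_or_gt 0 (m + ⌊u⌋ - ⌊u + m + 1 / 2⌋) with hpos | hneg
  · have : (0 : ℝ) ≤ (m + ⌊u⌋ - ⌊u + m + 1 / 2⌋ : ℤ) := by exact_mod_cast hpos
    right; linarith
  · have : ((m + ⌊u⌋ - ⌊u + m + 1 / 2⌋ : ℤ) : ℝ) ≤ -1 := by exact_mod_cast Int.le_sub_one_of_lt hneg
    left; linarith

noncomputable def stairBlock (h : ℝ → ℝ) (γ : ℝ) (q : ℤ → ℕ) (i : ℤ) (y : ℝ) : ℝ :=
  plateauInterp (fun k => γ * round (h (i + k / (2 * q i + 1)) / γ)) ((2 * q i + 1) * (y - i))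

noncomputable def staircase (h : ℝ → ℝ) (γ : ℝ) (q : ℤ → ℕ) (y : ℝ) : ℝ := stairBlock h γ q ⌊y⌋ y

theorem continuous_staircase (h : ℝ → ℝ) (γ : ℝ) (q : ℤ → ℕ) : Continuous (staircase h γ q) := by
  refine continuous_piecewise_floor (fun i => Continuous.continuousOn ?_) fun i => ?_
  · exact (continuous_plateauInterp _).comp (by fun_prop)
  · have hQ : (2 * q i + 1 : ℝ) ≠ 0 := by positivity
    have h₁ : (2 * q i + 1 : ℝ) * (i + 1 - i) = ((2 * q i + 1 : ℕ) : ℤ) := by push_cast; ring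
    have h₀ : (2 * q (i + 1) + 1 : ℝ) * ((i + 1 : ℝ) - ((i + 1 : ℤ) : ℝ)) = ((0 : ℤ) : ℝ) := by
      push_cast; ring
    rw [stairBlock, stairBlock, h₁, h₀, plateauInterp_intCast, plateauInterp_intCast]
    push_cast
    rw [div_self hQ]
    simp

theorem abs_mul_round_div_sub_le {γ : ℝ} (hγ : 0 < γ) (y : ℝ) :
    |γ * round (y / γ) - y| ≤ γ / 2 := by
  have h := abs_sub_round (y / γ)
  rw [← abs_neg, show -(γ * round (y / γ) - y) = γ * (y / γ - round (y / γ)) by field_simp; ring,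
    abs_mul, abs_of_pos hγ]
  nlinarith

theorem abs_staircase_sub_le (h : ℝ → ℝ) {γ : ℝ} (hγ : 0 < γ) (q : ℤ → ℕ)
    (hq : ∀ i : ℤ, ∀ y ∈ Icc (i : ℝ) (i + 1), ∀ z, |z - y| ≤ 1 / (2 * q i + 1) →
      |h z - h y| ≤ γ / 2)
    (y : ℝ) : |staircase h γ q y - h y| ≤ γ := by
  set i := ⌊y⌋
  set Q : ℝ := 2 * q i + 1
  have hQ : 0 < Q := by positivity
  set k := ⌊Q * (y - i)⌋
  have hy : y ∈ Icc (i : ℝ) (i + 1) := ⟨Int.floor_le y, (Int.lt_floor_add_one y).le⟩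
  have hk : (k : ℝ) / Q ≤ y - i ∧ y - i < (k + 1) / Q := by
    rw [div_le_iff₀ hQ, lt_div_iff₀ hQ]
    exact ⟨by linarith [Int.floor_le (Q * (y - i))],
      by linarith [Int.lt_floor_add_one (Q * (y - i))]⟩
  have hsample : ∀ j : ℤ, |i + j / Q - y| ≤ 1 / Q →
      γ * round (h (i + j / Q) / γ) ∈ Metric.closedBall (h y) γ := fun j hj => by
    rw [Metric.mem_closedBall, Real.dist_eq]
    calc |γ * round (h (i + j / Q) / γ) - h y|
        ≤ |γ * round (h (i + j / Q) / γ) - h (i + j / Q)| + |h (i + j / Q) - h y| :=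
          abs_sub_le _ _ _
      _ ≤ γ / 2 + γ / 2 := add_le_add (abs_mul_round_div_sub_le hγ _) (hq i y hy _ hj)
      _ = γ := add_halves γ
  have hQk : (1 : ℝ) / Q = (k + 1) / Q - k / Q := by ring
  rw [← Real.dist_eq, ← Metric.mem_closedBall, staircase, stairBlock]
  refine plateauInterp_mem_of_convex (convex_closedBall _ _) _ _ (hsample k ?_) (hsample (k + 1) ?_)
  · rw [abs_le]; constructor <;> linarith
  · push_cast; rw [abs_le]; constructor <;> linarith

theorem staircase_mem_or_add_half (h : ℝ → ℝ) (γ : ℝ) (q : ℤ → ℕ) {y : ℝ}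
    (hy : Int.fract y < 1 / 2) :
    (∃ m : ℤ, staircase h γ q y = γ * m) ∨ ∃ m : ℤ, staircase h γ q (y + 1 / 2) = γ * m := by
  have hfloor : ⌊y + 1 / 2⌋ = ⌊y⌋ := by
    rw [Int.floor_eq_iff]
    constructor <;> linarith [Int.floor_le y, Int.self_sub_floor y]
  have hshift : (2 * q ⌊y⌋ + 1 : ℝ) * (y + 1 / 2 - ⌊y⌋) =
      (2 * q ⌊y⌋ + 1) * (y - ⌊y⌋) + (q ⌊y⌋ : ℤ) + 1 / 2 := by
    push_cast; ring
  simp only [staircase, stairBlock, hfloor, hshift]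
  rcases plateauInterp_mem_range_or_add_half _ ((2 * q ⌊y⌋ + 1) * (y - ⌊y⌋)) (q ⌊y⌋) with
    ⟨k, hk⟩ | ⟨k, hk⟩
  · exact .inl ⟨_, hk.symm⟩
  · exact .inr ⟨_, hk.symm⟩

theorem exists_nat_fract_add_half_lt (s : ℝ) : ∃ n : ℕ, Int.fract (s + n / 2) < 1 / 2 := by
  rcases lt_or_ge (Int.fract s) (1 / 2) with hs | hs
  · exact ⟨0, by simpa using hs⟩
  refine ⟨1, ?_⟩
  have : Int.fract (s + 1 / 2) = Int.fract s - 1 / 2 := by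
    rw [Int.fract_eq_iff]
    refine ⟨by linarith, by linarith [Int.fract_lt_one s], ⌊s⌋ + 1, ?_⟩
    push_cast; linarith [Int.floor_add_fract s]
  simp only [Nat.cast_one, this]
  linarith [Int.fract_lt_one s]

theorem exists_modulus_on_unitIcc (h : ℝ → ℝ) (hh : Continuous h) {ε : ℝ} (hε : 0 < ε) :
    ∃ q : ℤ → ℕ, ∀ i : ℤ, ∀ y ∈ Icc (i : ℝ) (i + 1), ∀ z, |z - y| ≤ 1 / (2 * q i + 1) →
      |h z - h y| ≤ ε := by
  suffices ∀ i : ℤ, ∃ q : ℕ, ∀ y ∈ Icc (i : ℝ) (i + 1), ∀ z, |z - y| ≤ 1 / (2 * q + 1) →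
      |h z - h y| ≤ ε from Classical.axiomOfChoice this
  intro i
  obtain ⟨δ, hδ, hδh⟩ := Metric.mem_uniformity_dist.1 <|
    isCompact_Icc.uniformContinuousAt_of_continuousAt h (fun a _ => hh.continuousAt)
      (Metric.dist_mem_uniformity hε)
  obtain ⟨q, hq⟩ := exists_nat_gt (1 / δ)
  refine ⟨q, fun y hy z hz => ?_⟩
  have hqδ : 1 / (2 * q + 1 : ℝ) < δ := by
    rw [div_lt_iff₀ (by positivity)]
    rw [div_lt_iff₀ hδ] at hq
    nlinarith
  have hyz : dist y z < δ := by rw [Real.dist_eq, abs_sub_comm]; linarith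
  have : dist (h y) (h z) < ε := hδh hyz hy
  rw [Real.dist_eq, abs_sub_comm] at this
  exact this.le

theorem exists_approx_hitting_lattice_along_halfSteps (h : ℝ → ℝ) (hh : Continuous h) {γ : ℝ}
    (hγ : 0 < γ) : ∃ g : ℝ → ℝ, Continuous g ∧ (∀ y, |g y - h y| ≤ γ) ∧
      ∀ s, ∃ n : ℕ, ∃ m : ℤ, g (s + n / 2) = γ * m := by
  obtain ⟨q, hq⟩ := exists_modulus_on_unitIcc h hh (half_pos hγ)
  refine ⟨staircase h γ q, continuous_staircase h γ q, abs_staircase_sub_le h hγ q hq, fun s => ?_⟩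
  obtain ⟨n, hn⟩ := exists_nat_fract_add_half_lt s
  rcases staircase_mem_or_add_half h γ q hn with hm | hm
  · exact ⟨n, hm⟩
  · refine ⟨n + 1, ?_⟩
    rwa [Nat.cast_succ, add_div, ← add_assoc]

theorem half_le_abs_mul_intCast_sub_half {γ : ℝ} (hγ : 0 ≤ γ) (m : ℤ) :
    γ / 2 ≤ |γ * m - γ / 2| := by
  have hodd : (1 : ℝ) ≤ |2 * (m : ℝ) - 1| := by
    exact_mod_cast Int.one_le_abs (by omega : 2 * m - 1 ≠ 0)
  rw [show γ * m - γ / 2 = γ / 2 * (2 * m - 1) by ring, abs_mul, abs_of_nonneg (by positivity)]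
  nlinarith

theorem dinf_le_of_forall_abs_sub_le {f g : ℝ → ℝ} {r : ℝ} (hr : 0 ≤ r) (h : ∀ x, |f x - g x| ≤ r) :
    dinf f g ≤ r :=
  calc dinf f g ≤ (ENNReal.ofReal r).toReal := ENNReal.toReal_mono ENNReal.ofReal_ne_top
        ((min_le_left _ _).trans (iSup_le fun x => ENNReal.ofReal_le_ofReal (h x)))
    _ = r := ENNReal.toReal_ofReal hr

theorem not_memUN_of_forall_exists_le {X : Set (ℕ → ℝ)} {g : ℝ → ℝ} {x : ℕ → ℝ} (hx : x ∈ X) {δ : ℝ}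
    (hδ : 0 < δ) (h : ∀ t : ℝ, ∃ n : ℕ, δ ≤ |g (t + n) - x n|) : ¬ memUN X g := by
  rintro ⟨-, hU⟩
  have : ENNReal.ofReal δ ≤ ⨅ t, gapSup g x t := le_iInf fun t =>
    let ⟨n, hn⟩ := h t
    (ENNReal.ofReal_le_ofReal hn).trans (le_iSup (fun n : ℕ => ENNReal.ofReal |g (t + n) - x n|) n)
  rw [hU x hx, nonpos_iff_eq_zero, ENNReal.ofReal_eq_zero] at this
  linarith

theorem stmt7_general (X : Set (ℕ → ℝ))
    (h0 : (fun _ => (0 : ℝ)) ∈ X)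
    (hspan : ∀ c : ℝ, ∀ x ∈ X, (fun n => c + x n) ∈ X)
    (f : ℝ → ℝ) (hf : Continuous f) :
    ∀ ε > (0 : ℝ), ∃ g : ℝ → ℝ, Continuous g ∧ dinf f g < ε ∧ ¬ memUN X g := by
  intro ε hε
  obtain ⟨g, hg, hgf, hlattice⟩ := exists_approx_hitting_lattice_along_halfSteps
    (fun y => f (2 * y)) (by fun_prop) (half_pos hε)
  refine ⟨fun x => g (x / 2), by fun_prop, ?_, ?_⟩
  · refine (dinf_le_of_forall_abs_sub_le (half_pos hε).le fun x => ?_).trans_lt (half_lt_self hε)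
    simpa [abs_sub_comm, mul_div_cancel₀] using hgf (x / 2)
  · refine not_memUN_of_forall_exists_le (δ := ε / 2 / 2) (hspan (ε / 2 / 2) _ h0)
      (by positivity) fun t => ?_
    obtain ⟨n, m, hm⟩ := hlattice (t / 2)
    refine ⟨n, ?_⟩
    rw [add_div, hm, add_zero]
    exact half_le_abs_mul_intCast_sub_half (half_pos hε).le m

theorem stmt7 (X : Set (ℕ → ℝ)) (hX : ∀ x ∈ X, Bdd x)
    (h0 : (fun _ => (0 : ℝ)) ∈ X)
    (hspan : ∀ c : ℝ, ∀ x ∈ X, (fun n => c + x n) ∈ X)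
    (f : ℝ → ℝ) (hf : Continuous f) (hpw : PWAffine f) :
    ∀ ε > (0 : ℝ), ∃ g : ℝ → ℝ, Continuous g ∧ dinf f g < ε ∧ ¬ memUN X g :=
  stmt7_general X h0 hspan f hf
end

section
/- The set U_N(ℓ^∞) of nearly universal functions — continuous f : ℝ → ℝ such that for every bounded real sequence (x_n), inf_{t∈ℝ} sup_n |f(t+n) − x_n| = 0 — is nowhere dense in C(ℝ) with metric d_∞(f,g) = min(‖f−g‖_∞, 1). -/
open Filter Set

/-!
Approximate `f` by a continuous `g` which is a step function with values of modulus at least `r`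
(the values of `f`, pushed out of `(-r, r)`), except that on each cell the jump from one value to
the next happens on a short linear ramp. Cells in `[m, m + 1)` have length `2^{-a m}` and the ramps
sit at their midpoints, which are odd dyadics of level `a m + 1`. Taking `a m ≠ a (m + 1)`, the
midpoints of `[m, m + 1)` shifted by one stay away from those of `[m + 1, m + 2)`, so with narrow
ramps `|g u|` and `|g (u + 1)|` are never both below `r`. Every `h` within `r / 2` of `g` then
keeps `sup_n |h (t + n)| ≥ r / 2` for all `t`, so it fails to approximate the zero sequence.
-/

open Topology

theorem continuous_floor_div_glue {F : ℤ → ℝ → ℝ} {h : ℝ} (hh : 0 < h)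
    (hF : ∀ n, Continuous (F n)) (hglue : ∀ n : ℤ, F n ((n + 1) * h) = F (n + 1) ((n + 1) * h)) :
    Continuous fun u => F ⌊u / h⌋ u := by
  have hpiece : ∀ n : ℤ, ContinuousOn (fun u => F ⌊u / h⌋ u) (Icc (n * h) ((n + 1) * h)) := by
    intro n
    refine (hF n).continuousOn.congr fun u hu => ?_
    rcases hu.2.lt_or_eq with hlt | rfl
    · rw [Int.floor_eq_iff.2 ⟨(le_div_iff₀ hh).2 hu.1, (div_lt_iff₀ hh).2 hlt⟩]
    · rw [mul_div_cancel_right₀ _ hh.ne', hglue, ← Int.cast_one, ← Int.cast_add, Int.floor_intCast]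
  refine continuous_iff_continuousAt.2 fun u => ?_
  set n := round (u / h)
  have hnhds : Icc ((n - 1) * h) ((n + 1) * h) ∈ 𝓝 u := by
    have := abs_le.1 (abs_sub_round (u / h))
    refine Icc_mem_nhds ?_ ?_
    · rw [← lt_div_iff₀ hh]; linarith
    · rw [← div_lt_iff₀ hh]; linarith
  have hunion := (hpiece (n - 1)).union_of_isClosed (hpiece n) isClosed_Icc isClosed_Icc
  push_cast at hunion
  rw [sub_add_cancel, Icc_union_Icc_eq_Icc (by gcongr; linarith) (by gcongr; linarith)] at hunion
  exact hunion.continuousAt hnhds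

lemma floor_div_mul_mem_Icc {h u : ℝ} (hh : 0 < h) {k l : ℤ} (hk : k * h ≤ u) (hl : u < l * h) :
    k * h ≤ ⌊u / h⌋ * h ∧ (⌊u / h⌋ + 1) * h ≤ l * h := by
  have hk' : k ≤ ⌊u / h⌋ := Int.le_floor.2 ((le_div_iff₀ hh).2 hk)
  have hl' : ⌊u / h⌋ + 1 ≤ l := Int.floor_lt.2 ((div_lt_iff₀ hh).2 hl)
  exact ⟨mul_le_mul_of_nonneg_right (by exact_mod_cast hk') hh.le,
    mul_le_mul_of_nonneg_right (by exact_mod_cast hl') hh.le⟩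

lemma min_le_abs_div_two_pow_sub {x y : ℤ} (hx : Odd x) (hy : Odd y) {p q : ℕ} (hpq : p ≠ q) :
    min (1 / 2 ^ p) (1 / 2 ^ q) ≤ |(x : ℝ) / 2 ^ p - y / 2 ^ q| := by
  wlog hlt : p < q generalizing x y p q
  · rw [min_comm, abs_sub_comm]
    exact this hy hx hpq.symm (lt_of_le_of_ne (not_lt.1 hlt) hpq.symm)
  obtain ⟨d, rfl⟩ : ∃ d, q = p + d := ⟨q - p, by omega⟩
  have hodd : Odd (x * 2 ^ d - y) :=
    ((Int.even_pow.2 ⟨even_two, by omega⟩).mul_left x).sub_odd hy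
  have hdiff : (x : ℝ) / 2 ^ p - y / 2 ^ (p + d) = ((x * 2 ^ d - y : ℤ) : ℝ) / 2 ^ (p + d) := by
    push_cast
    rw [pow_add]
    field_simp
  rw [hdiff, abs_div, abs_of_pos (by positivity : (0 : ℝ) < 2 ^ (p + d))]
  refine (min_le_right _ _).trans (div_le_div_of_nonneg_right ?_ (by positivity))
  have hone : 1 ≤ |x * 2 ^ d - y| := Int.one_le_abs (by rintro h0; rw [h0] at hodd; simp at hodd)
  exact_mod_cast hone

/-- On the cell `[n h, (n + 1) h]`: the value `φ (n h)`, then a linear ramp of half-width `w`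
centred at the midpoint, then the value `φ ((n + 1) h)`. -/
noncomputable def rampPiece (φ : ℝ → ℝ) (h w : ℝ) (n : ℤ) (u : ℝ) : ℝ :=
  AffineMap.lineMap (φ (n * h)) (φ ((n + 1) * h))
    (projIcc (0 : ℝ) 1 zero_le_one ((u - (n + 1 / 2) * h) / (2 * w) + 1 / 2) : ℝ)

noncomputable def rampStep (φ : ℝ → ℝ) (h w : ℝ) (u : ℝ) : ℝ := rampPiece φ h w ⌊u / h⌋ u

section RampStep

variable {φ : ℝ → ℝ} {h w : ℝ} {n : ℤ} {u : ℝ}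

lemma rampPiece_of_le (hw : 0 < w) (hu : u ≤ (n + 1 / 2) * h - w) :
    rampPiece φ h w n u = φ (n * h) := by
  rw [rampPiece, projIcc_of_le_left]
  · exact AffineMap.lineMap_apply_zero _ _
  · have : (u - (n + 1 / 2) * h) / (2 * w) ≤ -1 / 2 := by
      rw [div_le_iff₀ (by positivity)]; linarith
    linarith

lemma rampPiece_of_ge (hw : 0 < w) (hu : (n + 1 / 2) * h + w ≤ u) :
    rampPiece φ h w n u = φ ((n + 1) * h) := by
  rw [rampPiece, projIcc_of_right_le]
  · exact AffineMap.lineMap_apply_one _ _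
  · have : 1 / 2 ≤ (u - (n + 1 / 2) * h) / (2 * w) := by
      rw [le_div_iff₀ (by positivity)]; linarith
    linarith

lemma rampPiece_mem_uIcc : rampPiece φ h w n u ∈ uIcc (φ (n * h)) (φ ((n + 1) * h)) :=
  segment_eq_uIcc (𝕜 := ℝ) _ _ ▸ lineMap_mem_segment ℝ _ _ (Subtype.prop _)

lemma continuous_rampPiece : Continuous (rampPiece φ h w n) := by
  unfold rampPiece; fun_prop

lemma abs_sub_center_lt_of_abs_rampPiece_lt {r : ℝ} (hw : 0 < w) (hφ : ∀ x, r ≤ |φ x|)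
    (hsmall : |rampPiece φ h w n u| < r) : |u - (n + 1 / 2) * h| < w := by
  by_contra! hfar
  rcases le_abs'.1 hfar with hle | hge
  · rw [rampPiece_of_le hw (by linarith)] at hsmall
    exact (hφ _).not_gt hsmall
  · rw [rampPiece_of_ge hw (by linarith)] at hsmall
    exact (hφ _).not_gt hsmall

lemma abs_rampPiece_sub_le {y C : ℝ} (h₀ : |φ (n * h) - y| ≤ C)
    (h₁ : |φ ((n + 1) * h) - y| ≤ C) : |rampPiece φ h w n u - y| ≤ C := by
  rw [abs_sub_comm, mem_Icc_iff_abs_le] at h₀ h₁ ⊢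
  exact uIcc_subset_Icc h₀ h₁ rampPiece_mem_uIcc

lemma rampStep_intCast_mul (hw : 0 < w) (hwh : 2 * w ≤ h) (k : ℤ) :
    rampStep φ h w (k * h) = φ (k * h) := by
  have hh : 0 < h := by linarith
  rw [rampStep, mul_div_cancel_right₀ _ hh.ne', Int.floor_intCast]
  exact rampPiece_of_le hw (by linarith)

lemma continuous_rampStep (hw : 0 < w) (hwh : 2 * w ≤ h) : Continuous (rampStep φ h w) := by
  refine continuous_floor_div_glue (by linarith) (fun n => continuous_rampPiece) fun n => ?_
  rw [rampPiece_of_ge hw (by linarith), rampPiece_of_le hw (by push_cast; linarith)]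
  push_cast
  rfl

end RampStep

noncomputable def dyadicMesh (a : ℤ → ℕ) (m : ℤ) : ℝ := 1 / 2 ^ a m

noncomputable def rampWidth (a : ℤ → ℕ) (m : ℤ) : ℝ :=
  min (dyadicMesh a (m - 1)) (min (dyadicMesh a m) (dyadicMesh a (m + 1))) / 4

noncomputable def dyadicRamp (φ : ℝ → ℝ) (a : ℤ → ℕ) (u : ℝ) : ℝ :=
  rampStep φ (dyadicMesh a ⌊u⌋) (rampWidth a ⌊u⌋) u

section DyadicRamp

variable {φ : ℝ → ℝ} {a : ℤ → ℕ}

lemma dyadicMesh_pos (m : ℤ) : 0 < dyadicMesh a m := by unfold dyadicMesh; positivity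

lemma rampWidth_pos (m : ℤ) : 0 < rampWidth a m :=
  div_pos (lt_min (dyadicMesh_pos _) (lt_min (dyadicMesh_pos _) (dyadicMesh_pos _))) four_pos

lemma two_mul_rampWidth_le (m : ℤ) : 2 * rampWidth a m ≤ dyadicMesh a m := by
  have : min (dyadicMesh a (m - 1)) (min (dyadicMesh a m) (dyadicMesh a (m + 1))) ≤
      dyadicMesh a m :=
    (min_le_right _ _).trans (min_le_left _ _)
  unfold rampWidth
  linarith [dyadicMesh_pos (a := a) m]

lemma rampWidth_add_le (m : ℤ) :
    rampWidth a m + rampWidth a (m + 1) ≤ min (dyadicMesh a m) (dyadicMesh a (m + 1)) / 2 := by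
  have h₀ : min (dyadicMesh a (m - 1)) (min (dyadicMesh a m) (dyadicMesh a (m + 1))) ≤
      min (dyadicMesh a m) (dyadicMesh a (m + 1)) :=
    min_le_right _ _
  have h₁ : min (dyadicMesh a m) (min (dyadicMesh a (m + 1)) (dyadicMesh a (m + 1 + 1))) ≤
      min (dyadicMesh a m) (dyadicMesh a (m + 1)) :=
    min_le_min_left _ (min_le_left _ _)
  unfold rampWidth
  rw [add_sub_cancel_right]
  linarith

lemma intCast_mul_two_pow_mul_dyadicMesh (m k : ℤ) :
    ((k * 2 ^ a m : ℤ) : ℝ) * dyadicMesh a m = k := by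
  unfold dyadicMesh; push_cast; field_simp

lemma one_div_two_pow_succ_eq (m : ℤ) : (1 : ℝ) / 2 ^ (a m + 1) = dyadicMesh a m / 2 := by
  unfold dyadicMesh; rw [pow_succ]; field_simp

lemma dyadic_center_eq (m n : ℤ) :
    ((n : ℝ) + 1 / 2) * dyadicMesh a m = ((2 * n + 1 : ℤ) : ℝ) / 2 ^ (a m + 1) := by
  unfold dyadicMesh; push_cast; field_simp; ring

lemma dyadic_center_add_one_eq (m n : ℤ) : ((n : ℝ) + 1 / 2) * dyadicMesh a m + 1 =
    ((2 * (n + 2 ^ a m) + 1 : ℤ) : ℝ) / 2 ^ (a m + 1) := by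
  unfold dyadicMesh; push_cast; field_simp; ring

lemma rampStep_dyadic_intCast (m k : ℤ) :
    rampStep φ (dyadicMesh a m) (rampWidth a m) k = φ k := by
  rw [← intCast_mul_two_pow_mul_dyadicMesh m k,
    rampStep_intCast_mul (rampWidth_pos m) (two_mul_rampWidth_le m)]

lemma continuous_dyadicRamp : Continuous (dyadicRamp φ a) := by
  have := continuous_floor_div_glue (F := fun m => rampStep φ (dyadicMesh a m) (rampWidth a m))
    one_pos (fun m => continuous_rampStep (rampWidth_pos m) (two_mul_rampWidth_le m)) fun m => by
      have h₀ := rampStep_dyadic_intCast (φ := φ) (a := a) m (m + 1)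
      have h₁ := rampStep_dyadic_intCast (φ := φ) (a := a) (m + 1) (m + 1)
      push_cast at h₀ h₁
      rw [mul_one, h₀, h₁]
  unfold dyadicRamp
  simpa only [div_one] using this

lemma abs_dyadicRamp_sub_le {f : ℝ → ℝ} {C D : ℝ} (hφ : ∀ x, |φ x - f x| ≤ C)
    (hmod : ∀ m : ℤ, ∀ x ∈ Icc (m : ℝ) (m + 1), ∀ y ∈ Icc (m : ℝ) (m + 1),
      |x - y| ≤ dyadicMesh a m → |f x - f y| ≤ D) (u : ℝ) :
    |dyadicRamp φ a u - f u| ≤ C + D := by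
  set m := ⌊u⌋
  set h := dyadicMesh a m
  have hh : 0 < h := dyadicMesh_pos m
  set n := ⌊u / h⌋
  have hunit : u ∈ Icc (m : ℝ) (m + 1) := ⟨Int.floor_le u, (Int.lt_floor_add_one u).le⟩
  have hnodes := floor_div_mul_mem_Icc hh (u := u)
    (by rw [intCast_mul_two_pow_mul_dyadicMesh]; exact hunit.1)
    (by rw [intCast_mul_two_pow_mul_dyadicMesh]; exact_mod_cast Int.lt_floor_add_one u)
  rw [intCast_mul_two_pow_mul_dyadicMesh, intCast_mul_two_pow_mul_dyadicMesh] at hnodes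
  push_cast at hnodes
  have hle := Int.sub_floor_div_mul_nonneg u hh
  have hlt := Int.sub_floor_div_mul_lt u hh
  have hnode : ∀ x ∈ Icc (n * h) ((n + 1) * h), |φ x - f u| ≤ C + D := by
    intro x hx
    have : |f x - f u| ≤ D := hmod m x ⟨by linarith [hx.1], by linarith [hx.2]⟩ u hunit
      (abs_le.2 ⟨by linarith [hx.1], by linarith [hx.2]⟩)
    calc |φ x - f u| ≤ |φ x - f x| + |f x - f u| := abs_sub_le _ _ _
      _ ≤ C + D := add_le_add (hφ x) this
  exact abs_rampPiece_sub_le (hnode _ (left_mem_Icc.2 (by linarith)))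
    (hnode _ (right_mem_Icc.2 (by linarith)))

lemma le_abs_dyadicRamp_or_le_abs_dyadicRamp_add_one {r : ℝ} (hφ : ∀ x, r ≤ |φ x|)
    (ha : ∀ m, a m ≠ a (m + 1)) (u : ℝ) :
    r ≤ |dyadicRamp φ a u| ∨ r ≤ |dyadicRamp φ a (u + 1)| := by
  by_contra! hsmall
  obtain ⟨h₀, h₁⟩ := hsmall
  rw [dyadicRamp, Int.floor_add_one] at h₁
  set m := ⌊u⌋
  set n₀ := ⌊u / dyadicMesh a m⌋
  set n₁ := ⌊(u + 1) / dyadicMesh a (m + 1)⌋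
  have hc₀ : |u - (n₀ + 1 / 2) * dyadicMesh a m| < rampWidth a m :=
    abs_sub_center_lt_of_abs_rampPiece_lt (rampWidth_pos _) hφ h₀
  have hc₁ : |u + 1 - (n₁ + 1 / 2) * dyadicMesh a (m + 1)| < rampWidth a (m + 1) :=
    abs_sub_center_lt_of_abs_rampPiece_lt (rampWidth_pos _) hφ h₁
  have hsep := min_le_abs_div_two_pow_sub (odd_two_mul_add_one (n₀ + 2 ^ a m))
    (odd_two_mul_add_one n₁) (p := a m + 1) (q := a (m + 1) + 1) (by simpa using ha m)
  rw [← dyadic_center_add_one_eq, ← dyadic_center_eq, one_div_two_pow_succ_eq,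
    one_div_two_pow_succ_eq, min_div_div_right zero_le_two] at hsep
  have htri := abs_sub (u + 1 - (n₁ + 1 / 2) * dyadicMesh a (m + 1))
    (u - (n₀ + 1 / 2) * dyadicMesh a m)
  rw [show u + 1 - (n₁ + 1 / 2) * dyadicMesh a (m + 1) - (u - (n₀ + 1 / 2) * dyadicMesh a m) =
    (n₀ + 1 / 2) * dyadicMesh a m + 1 - (n₁ + 1 / 2) * dyadicMesh a (m + 1) by ring] at htri
  linarith [rampWidth_add_le (a := a) m]

end DyadicRamp

noncomputable def pushOut (r v : ℝ) : ℝ := if |v| < r then r else v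

lemma le_abs_pushOut {r : ℝ} (hr : 0 ≤ r) (v : ℝ) : r ≤ |pushOut r v| := by
  unfold pushOut
  split_ifs with hv
  · rw [abs_of_nonneg hr]
  · exact not_lt.1 hv

lemma abs_pushOut_sub_le {r : ℝ} (hr : 0 ≤ r) (v : ℝ) : |pushOut r v - v| ≤ 2 * r := by
  unfold pushOut
  split_ifs with hv
  · rw [abs_le]; constructor <;> linarith [abs_lt.1 hv]
  · simpa using hr

lemma IsCompact.exists_pow_modulus {K : Set ℝ} (hK : IsCompact K) {f : ℝ → ℝ}
    (hf : ContinuousOn f K) {ε : ℝ} (hε : 0 < ε) :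
    ∃ A : ℕ, ∀ a ≥ A, ∀ x ∈ K, ∀ y ∈ K, |x - y| ≤ 1 / 2 ^ a → |f x - f y| ≤ ε := by
  obtain ⟨δ, hδ, hd⟩ :=
    Metric.uniformContinuousOn_iff.1 (hK.uniformContinuousOn_of_continuous hf) ε hε
  obtain ⟨A, hA⟩ := exists_pow_lt_of_lt_one hδ (by norm_num : (1 / 2 : ℝ) < 1)
  refine ⟨A, fun a ha x hx y hy hxy => (hd x hx y hy ?_).le⟩
  calc dist x y = |x - y| := Real.dist_eq x y
    _ ≤ 1 / 2 ^ a := hxy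
    _ ≤ (1 / 2) ^ A := by rw [one_div_pow]; gcongr; norm_num
    _ < δ := hA

theorem exists_continuous_approx_le_abs_or_le_abs_add_one {f : ℝ → ℝ} (hf : Continuous f)
    {r : ℝ} (hr : 0 < r) :
    ∃ g : ℝ → ℝ, Continuous g ∧ (∀ u, |g u - f u| ≤ 3 * r) ∧
      ∀ u, r ≤ |g u| ∨ r ≤ |g (u + 1)| := by
  choose A hA using fun m : ℤ =>
    (isCompact_Icc (a := (m : ℝ)) (b := m + 1)).exists_pow_modulus hf.continuousOn (half_pos hr)
  set a : ℤ → ℕ := fun m => 2 * A m + if Even m then 0 else 1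
  have ha : ∀ m, a m ≠ a (m + 1) := by
    intro m
    simp only [a, Int.even_add_one]
    split_ifs <;> omega
  refine ⟨dyadicRamp (pushOut r ∘ f) a, continuous_dyadicRamp, fun u => ?_,
    le_abs_dyadicRamp_or_le_abs_dyadicRamp_add_one (fun x => le_abs_pushOut hr.le _) ha⟩
  have := abs_dyadicRamp_sub_le (fun x => abs_pushOut_sub_le hr.le (f x))
    (fun m => hA m (a m) (le_add_right (by omega))) u
  exact this.trans (by linarith)

lemma dinf_le_of_forall_abs_sub_le_s11 {f g : ℝ → ℝ} {c : ℝ} (hc : 0 ≤ c)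
    (h : ∀ u, |f u - g u| ≤ c) : dinf f g ≤ c :=
  ENNReal.toReal_le_of_le_ofReal hc
    ((min_le_left _ _).trans (iSup_le fun u => ENNReal.ofReal_le_ofReal (h u)))

lemma abs_sub_lt_of_dinf_lt {g h : ℝ → ℝ} {d : ℝ} (hd : d ≤ 1) (hlt : dinf g h < d) (u : ℝ) :
    |g u - h u| < d := by
  by_contra! hle
  have hne : min (⨆ x : ℝ, ENNReal.ofReal |g x - h x|) 1 ≠ ⊤ :=
    ((min_le_right _ _).trans_lt ENNReal.one_lt_top).ne
  have : ENNReal.ofReal d ≤ min (⨆ x : ℝ, ENNReal.ofReal |g x - h x|) 1 :=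
    le_min ((ENNReal.ofReal_le_ofReal hle).trans (le_iSup (fun x => ENNReal.ofReal |g x - h x|) u))
      (ENNReal.ofReal_le_one.2 hd)
  exact hlt.not_ge ((ENNReal.ofReal_le_iff_le_toReal hne).1 this)

lemma not_memUN_of_forall_exists_le_abs {h : ℝ → ℝ} {c : ℝ} (hc : 0 < c)
    (hfar : ∀ t, ∃ n : ℕ, c ≤ |h (t + n)|) : ¬ memUN {x | Bdd x} h := by
  rintro ⟨-, H⟩
  have hle : ENNReal.ofReal c ≤ ⨅ t, gapSup h 0 t := le_iInf fun t => by
    obtain ⟨n, hn⟩ := hfar t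
    exact (ENNReal.ofReal_le_ofReal (by simpa using hn)).trans
      (le_iSup (fun n : ℕ => ENNReal.ofReal |h (t + n) - (0 : ℕ → ℝ) n|) n)
  rw [H 0 ⟨0, by simp⟩, nonpos_iff_eq_zero, ENNReal.ofReal_eq_zero] at hle
  exact hle.not_gt hc

/-- U_N(ℓ^∞) is nowhere dense in (C(ℝ), d_∞). -/
theorem stmt11 :
    ∀ f : ℝ → ℝ, Continuous f → ∀ ε > (0 : ℝ),
      ∃ g : ℝ → ℝ, Continuous g ∧ dinf f g < ε ∧
        ∃ δ > (0 : ℝ), ∀ h : ℝ → ℝ, Continuous h → dinf g h < δ →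
          ¬ memUN {x | Bdd x} h := by
  intro f hf ε hε
  set r := min ε 1 / 4 with hr_def
  have hr : 0 < r := by positivity
  obtain ⟨g, hg, hclose, havoid⟩ := exists_continuous_approx_le_abs_or_le_abs_add_one hf hr
  refine ⟨g, hg, ?_, r / 2, half_pos hr, fun h _ hgh => ?_⟩
  · calc dinf f g ≤ 3 * r :=
          dinf_le_of_forall_abs_sub_le_s11 (by positivity) fun u => abs_sub_comm (f u) (g u) ▸ hclose u
      _ < ε := by linarith [min_le_left ε 1, hr_def]
  · have hgh' := abs_sub_lt_of_dinf_lt (by linarith [min_le_right ε 1, hr_def]) hgh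
    refine not_memUN_of_forall_exists_le_abs (half_pos hr) fun t => ?_
    have h0 := abs_sub_abs_le_abs_sub (g t) (h t)
    have h1 := abs_sub_abs_le_abs_sub (g (t + 1)) (h (t + 1))
    rcases havoid t with hg0 | hg1
    · exact ⟨0, by simpa using (by linarith [hgh' t] : r / 2 ≤ |h t|)⟩
    · exact ⟨1, by simpa using (by linarith [hgh' (t + 1)] : r / 2 ≤ |h (t + 1)|)⟩
end
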